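/- arXiv:1810.06016 — 4 statements merged into one kernel-verified Lean document; each statement's English description precedes it below -/
import Mathlib

section
/- Let V be a finite-dimensional real vector space with a nondegenerate symmetric bilinear form g and S : V → V a g-symmetric linear operator. Then the kernel of S is a nondegenerate subspace (i.e., ker S ∩ (ker S)^⊥ = 0 with respect to g) if and only if ker S² = ker S. -/
/-!
Self-adjointness of `S` makes `range S` orthogonal to `ker S`, and since `g` is nondegenerate the
orthogonal complement of `ker S` has dimension `dim V - dim ker S = dim range S`; hence
`(ker S)^⊥ = range S`. The theorem is then the purely algebraic fact that `ker S ∩ range S = 0`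
exactly when `S` kills no vector of `range S`, i.e. when `ker S² = ker S`.
-/

namespace LinearMap

theorem ker_inf_range_eq_bot_iff_ker_comp_self_eq_ker {R M : Type*} [Semiring R] [AddCommMonoid M]
    [Module R M] (f : M →ₗ[R] M) :
    ker f ⊓ range f = ⊥ ↔ ker (f ∘ₗ f) = ker f := by
  constructor
  · intro h
    refine le_antisymm (fun x hx => ?_) (ker_le_ker_comp f f)
    have hfx : f x ∈ ker f ⊓ range f := ⟨hx, x, rfl⟩
    rw [h, Submodule.mem_bot] at hfx
    exact hfx
  · intro h
    refine eq_bot_iff.mpr ?_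
    rintro _ ⟨hfx, x, rfl⟩
    have hx : x ∈ ker (f ∘ₗ f) := hfx
    rw [h] at hx
    exact hx

namespace BilinForm

theorem range_le_orthogonal_ker {R M : Type*} [CommRing R] [AddCommGroup M] [Module R M]
    {B : LinearMap.BilinForm R M} {S : M →ₗ[R] M} (hS : ∀ x y, B (S x) y = B x (S y)) :
    range S ≤ B.orthogonal (ker S) := by
  rintro _ ⟨x, rfl⟩ n hn
  rw [← hS, mem_ker.mp hn, map_zero]
  rfl

variable {K V : Type*} [Field K] [AddCommGroup V] [Module K V] [FiniteDimensional K V]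
  {B : LinearMap.BilinForm K V}

theorem finrank_orthogonal_of_separatingLeft (hB : B.SeparatingLeft) (W : Submodule K V) :
    Module.finrank K (B.orthogonal W) = Module.finrank K V - Module.finrank K W := by
  have := finrank_add_finrank_orthogonal' (B := B) W
  rw [separatingLeft_iff_ker_eq_bot.mp hB, inf_bot_eq, finrank_bot, add_zero] at this
  omega

theorem orthogonal_ker_eq_range (hB : B.SeparatingLeft) {S : V →ₗ[K] V}
    (hS : ∀ x y, B (S x) y = B x (S y)) :
    B.orthogonal (ker S) = range S := by
  refine (Submodule.eq_of_le_of_finrank_le (range_le_orthogonal_ker hS) ?_).symm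
  rw [finrank_orthogonal_of_separatingLeft hB, ← finrank_range_add_finrank_ker S]
  omega

end BilinForm

end LinearMap

theorem ker_nondegenerate_iff_ker_sq_eq_ker_general
    {V : Type*} [AddCommGroup V] [Module ℝ V] [FiniteDimensional ℝ V]
    (g : LinearMap.BilinForm ℝ V)
    (hnd : ∀ x : V, (∀ y : V, g x y = 0) → x = 0)
    (S : V →ₗ[ℝ] V) (hS : ∀ x y : V, g (S x) y = g x (S y)) :
    LinearMap.ker S ⊓ g.orthogonal (LinearMap.ker S) = ⊥ ↔
      LinearMap.ker (S ∘ₗ S) = LinearMap.ker S := by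
  rw [LinearMap.BilinForm.orthogonal_ker_eq_range hnd hS]
  exact LinearMap.ker_inf_range_eq_bot_iff_ker_comp_self_eq_ker S

/-- For a `g`-symmetric operator `S` on a finite-dimensional real
vector space with nondegenerate symmetric bilinear form `g`, the kernel of `S`
is a nondegenerate subspace iff `ker S² = ker S`. -/
theorem ker_nondegenerate_iff_ker_sq_eq_ker
    {V : Type*} [AddCommGroup V] [Module ℝ V] [FiniteDimensional ℝ V]
    (g : LinearMap.BilinForm ℝ V)
    (hnd : ∀ x : V, (∀ y : V, g x y = 0) → x = 0)
    (hsymm : ∀ x y : V, g x y = g y x)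
    (S : V →ₗ[ℝ] V) (hS : ∀ x y : V, g (S x) y = g x (S y)) :
    LinearMap.ker S ⊓ g.orthogonal (LinearMap.ker S) = ⊥ ↔
      LinearMap.ker (S ∘ₗ S) = LinearMap.ker S :=
  ker_nondegenerate_iff_ker_sq_eq_ker_general g hnd S hS
end

section
/- Let S be a g-symmetric operator on ℝⁿ with Lorentzian g, whose matrix in a pseudo-orthonormal basis has form (iii) with a₀ = a₁ = … = a_{n−2} = a (i.e., S = a·id + N where N is the rank-one nilpotent of the pseudo-orthonormal Jordan block). Then for n ≥ 3 and a ≠ 0, there is no g-nondegenerate hyperplane D with S(D) ⊆ D^⊥. -/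
/-- Let `S` have form (iii) with all diagonal entries equal to
`a ≠ 0` in a pseudo-orthonormal basis `{u, v, e₃, …, eₙ}` of an `n`-dimensional
Lorentzian space, `n ≥ 3`: `S u = a u + v`, `S v = a v`, `S eᵢ = a eᵢ`.
Then there is no `g`-nondegenerate hyperplane `D` with `S(D) ⊆ D^⊥`. -/
theorem form_iii_nonzero_shift_no_adapted_hyperplane
    {V : Type*} [AddCommGroup V] [Module ℝ V] [FiniteDimensional ℝ V]
    (g : LinearMap.BilinForm ℝ V)
    (hsymm : ∀ x y : V, g x y = g y x)
    {n : ℕ} (hn : 3 ≤ n) (b : Module.Basis (Fin n) ℝ V)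
    (hb : ∀ i j : Fin n, g (b i) (b j) =
      if i = j then (if 2 ≤ i.val then 1 else 0)
      else (if (i.val = 0 ∧ j.val = 1) ∨ (i.val = 1 ∧ j.val = 0) then 1 else 0))
    (S : V →ₗ[ℝ] V) (a : ℝ) (ha : a ≠ 0)
    (hSu : S (b ⟨0, by omega⟩) = a • b ⟨0, by omega⟩ + b ⟨1, by omega⟩)
    (hSv : S (b ⟨1, by omega⟩) = a • b ⟨1, by omega⟩)
    (hSe : ∀ i : Fin n, 2 ≤ i.val → S (b i) = a • b i)
    (D : Submodule ℝ V)
    (hD : Module.finrank ℝ D + 1 = Module.finrank ℝ V)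
    (hDnd : D ⊓ g.orthogonal D = ⊥)
    (hadapt : ∀ x ∈ D, ∀ y ∈ D, g (S x) y = 0) :
    False := by
  set i0 : Fin n := ⟨0, by omega⟩
  set i1 : Fin n := ⟨1, by omega⟩
  set φ : V →ₗ[ℝ] ℝ := b.coord i0
  -- S = a • id + φ • b i1
  have hS : S = a • (LinearMap.id : V →ₗ[ℝ] V) + φ.smulRight (b i1) := by
    apply b.ext
    intro i
    have hc : φ (b i) = if i = i0 then 1 else 0 := by
      simp [φ, Module.Basis.coord_apply, Finsupp.single_apply]
    rcases lt_or_ge i.val 2 with h2 | h2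
    · interval_cases hv : i.val
      · have : i = i0 := Fin.ext hv
        subst this
        simp [LinearMap.smulRight_apply, hc, hSu]
      · have : i = i1 := Fin.ext hv
        subst this
        have : φ (b i1) = 0 := by
          rw [hc]; simp [i0, i1, Fin.ext_iff]
        simp [LinearMap.smulRight_apply, this, hSv]
    · have : φ (b i) = 0 := by
        rw [hc]
        have : i ≠ i0 := by
          intro h; rw [h] at h2; simp [i0] at h2
        simp [this]
      simp [LinearMap.smulRight_apply, this, hSe i h2]
  -- g (b i1) = φ
  have hg1 : g (b i1) = φ := by
    apply b.ext
    intro j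
    have := hb i1 j
    have hc : φ (b j) = if j = i0 then 1 else 0 := by
      simp [φ, Module.Basis.coord_apply, Finsupp.single_apply]
    rw [hc, this]
    rcases eq_or_ne j i0 with rfl | hj
    · simp [i0, i1, Fin.ext_iff]
    · rcases eq_or_ne j i1 with rfl | hj1
      · simp [i0, i1, Fin.ext_iff]
      · have h0 : i0 ≠ j := fun h => hj h.symm
        have h1 : i1 ≠ j := fun h => hj1 h.symm
        have hv1 : j.val ≠ 1 := by
          intro h; exact hj1 (Fin.ext h)
        have hv0 : j.val ≠ 0 := by
          intro h; exact hj (Fin.ext h)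
        simp [h0, h1, hv0, hv1, i1, hj]
  -- key relation on D
  have key : ∀ x ∈ D, ∀ y ∈ D, a * g x y + φ x * φ y = 0 := by
    intro x hx y hy
    have := hadapt x hx y hy
    rw [hS] at this
    simpa [LinearMap.smulRight_apply, map_add, map_smul, hg1] using this
  -- find nonzero x ∈ D with φ x = 0
  have hdim : 2 ≤ Module.finrank ℝ D := by
    have hV : Module.finrank ℝ V = n := Module.finrank_eq_card_basis b |>.trans (by simp)
    omega
  set ψ : D →ₗ[ℝ] ℝ := φ.comp D.subtype
  have hker : LinearMap.ker ψ ≠ ⊥ := by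
    intro h
    have hinj : Function.Injective ψ := LinearMap.ker_eq_bot.mp h
    have := LinearMap.finrank_le_finrank_of_injective hinj
    have : Module.finrank ℝ D ≤ 1 := le_trans this (by simp)
    omega
  obtain ⟨x, hxk, hx0⟩ := Submodule.exists_mem_ne_zero_of_ne_bot hker
  have hφx : φ (x : V) = 0 := hxk
  have hxD : (x : V) ∈ D := x.2
  have horth : (x : V) ∈ g.orthogonal D := by
    rw [LinearMap.BilinForm.mem_orthogonal_iff]
    intro y hy
    have := key (x : V) hxD y hy
    rw [hφx] at this
    have hgxy : g (x : V) y = 0 := by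
      have h' : a * g (x : V) y = 0 := by linarith [this]
      rcases mul_eq_zero.mp h' with h | h
      · exact absurd h ha
      · exact h
    exact (hsymm y (x : V)).trans hgxy  -- IsOrtho y x = g y x = 0
  have : (x : V) ∈ D ⊓ g.orthogonal D := ⟨hxD, horth⟩
  rw [hDnd] at this
  exact hx0 (Subtype.ext (by simpa using this))
end

section
/- Let y : [0, ∞) → ℝ be differentiable with y'(t) = y(t)² for all t ≥ 0. Then y(t) ≤ 0 for all t ≥ 0; symmetrically, a global solution on (−∞, 0] is nonnegative; hence a solution defined on all of ℝ vanishes identically. -/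
/-!
If a solution of `y' = y²` on `[a, ∞)` had `y a = c > 0`, it would be increasing, hence
positive, and `1 / y` would have derivative `-1`; so `1 / y` would vanish at `a + 1 / c`,
i.e. `y` blows up in finite time. The reflection `s ↦ -y (-s)` maps solutions on `(-∞, a]`
to solutions on `[-a, ∞)`.
-/

open Set

section Riccati

variable {y : ℝ → ℝ} {a : ℝ}

theorem monotoneOn_Ici_of_hasDerivWithinAt_sq
    (hy : ∀ t ∈ Ici a, HasDerivWithinAt y (y t ^ 2) (Ici a) t) : MonotoneOn y (Ici a) :=
  monotoneOn_of_hasDerivWithinAt_nonneg (convex_Ici a)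
    (fun t ht => (hy t ht).continuousWithinAt)
    (fun t ht => by
      rw [interior_Ici] at ht ⊢
      exact (hy t (Ioi_subset_Ici_self ht)).mono Ioi_subset_Ici_self)
    (fun t _ => sq_nonneg (y t))

theorem inv_add_eq_of_hasDerivWithinAt_sq {b : ℝ} (hab : a ≤ b)
    (hy : ∀ t ∈ Ici a, HasDerivWithinAt y (y t ^ 2) (Ici a) t)
    (hne : ∀ t ∈ Icc a b, y t ≠ 0) : (y b)⁻¹ + b = (y a)⁻¹ + a := by
  have hcont : ContinuousOn (fun t => (y t)⁻¹ + t) (Icc a b) :=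
    ((ContinuousOn.mono (fun t ht => (hy t ht).continuousWithinAt)
      Icc_subset_Ici_self).inv₀ hne).add continuousOn_id
  have hderiv : ∀ t ∈ Ico a b, HasDerivWithinAt (fun t => (y t)⁻¹ + t) 0 (Ici t) t := by
    intro t ht
    have hyt : y t ≠ 0 := hne t (Ico_subset_Icc_self ht)
    refine ((((hy t ht.1).mono (Ici_subset_Ici.2 ht.1)).inv hyt).add
      (hasDerivWithinAt_id t _)).congr_deriv ?_
    rw [neg_div, div_self (pow_ne_zero 2 hyt), neg_add_cancel]
  exact constant_of_has_deriv_right_zero hcont hderiv b (right_mem_Icc.2 hab)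

theorem nonpos_of_hasDerivWithinAt_sq_Ici
    (hy : ∀ t ∈ Ici a, HasDerivWithinAt y (y t ^ 2) (Ici a) t) : y a ≤ 0 := by
  by_contra! hya
  have hpos : ∀ t ∈ Ici a, 0 < y t := fun t ht =>
    hya.trans_le (monotoneOn_Ici_of_hasDerivWithinAt_sq hy self_mem_Ici ht ht)
  have hab : a ≤ a + (y a)⁻¹ := le_add_of_nonneg_right (inv_nonneg.2 hya.le)
  have hblowup := inv_add_eq_of_hasDerivWithinAt_sq hab hy fun t ht => (hpos t ht.1).ne'
  have : 0 < (y (a + (y a)⁻¹))⁻¹ := inv_pos.2 (hpos _ hab)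
  linarith

theorem hasDerivWithinAt_sq_neg_comp_neg
    (hy : ∀ t ∈ Iic a, HasDerivWithinAt y (y t ^ 2) (Iic a) t) :
    ∀ s ∈ Ici (-a), HasDerivWithinAt (fun s => -y (-s)) ((-y (-s)) ^ 2) (Ici (-a)) s := by
  intro s hs
  have hmaps : MapsTo (fun s : ℝ => -s) (Ici (-a)) (Iic a) := fun x hx => neg_le.1 (mem_Ici.1 hx)
  refine ((hy (-s) (hmaps hs)).scomp s (hasDerivAt_neg s).hasDerivWithinAt hmaps).neg
    |>.congr_deriv ?_
  simp

theorem nonneg_of_hasDerivWithinAt_sq_Iic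
    (hy : ∀ t ∈ Iic a, HasDerivWithinAt y (y t ^ 2) (Iic a) t) : 0 ≤ y a := by
  simpa using nonpos_of_hasDerivWithinAt_sq_Ici (hasDerivWithinAt_sq_neg_comp_neg hy)

end Riccati

/-- A solution of `y' = y²` on `[0, ∞)` is nonpositive there; a
solution on `(−∞, 0]` is nonnegative there; hence a solution on all of `ℝ`
vanishes identically. -/
theorem riccati_half_line_sign_and_global_vanishing :
    (∀ y : ℝ → ℝ,
      (∀ t ∈ Set.Ici (0 : ℝ), HasDerivWithinAt y ((y t) ^ 2) (Set.Ici 0) t) →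
      ∀ t ∈ Set.Ici (0 : ℝ), y t ≤ 0) ∧
    (∀ y : ℝ → ℝ,
      (∀ t ∈ Set.Iic (0 : ℝ), HasDerivWithinAt y ((y t) ^ 2) (Set.Iic 0) t) →
      ∀ t ∈ Set.Iic (0 : ℝ), 0 ≤ y t) ∧
    (∀ y : ℝ → ℝ, (∀ t : ℝ, HasDerivAt y ((y t) ^ 2) t) → ∀ t : ℝ, y t = 0) := by
  refine ⟨fun y hy t ht => ?_, fun y hy t ht => ?_, fun y hy t => ?_⟩
  · exact nonpos_of_hasDerivWithinAt_sq_Ici fun s hs =>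
      (hy s (mem_Ici.2 (le_trans ht hs))).mono (Ici_subset_Ici.2 ht)
  · exact nonneg_of_hasDerivWithinAt_sq_Iic fun s hs =>
      (hy s (mem_Iic.2 (le_trans hs ht))).mono (Iic_subset_Iic.2 ht)
  · exact le_antisymm
      (nonpos_of_hasDerivWithinAt_sq_Ici fun s _ => (hy s).hasDerivWithinAt)
      (nonneg_of_hasDerivWithinAt_sq_Iic fun s _ => (hy s).hasDerivWithinAt)
end

section
/- Let V be a Lorentzian vector space and S a g-symmetric operator with dim ker S = n − 2 and ker S degenerate (its radical nonzero). Then there exists a null vector ξ ∈ ker S with S²-related property: im S ∩ ker S = span{ξ}, i.e., the intersection of the image and kernel of S is exactly the one-dimensional radical of ker S. -/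
/-!
For `g`-self-adjoint `S` and nondegenerate `g`, `range S = (ker S)ᗮ`, so `range S ⊓ ker S` is the
radical of `ker S`, a totally isotropic subspace. In Lorentzian signature `g` is positive definite
on the hyperplane `x₀ = 0`, so a totally isotropic subspace is at most a line: for orthogonal null
vectors `ξ ≠ 0` and `η`, the vector `ξ₀ η - η₀ ξ` is null with vanishing time coordinate, hence
zero.
-/

open Module Submodule

namespace LinearMap.BilinForm

section Field

variable {K V : Type*} [Field K] [AddCommGroup V] [Module K V] {B : LinearMap.BilinForm K V}

theorem le_span_singleton_of_isotropic (f : V →ₗ[K] K)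
    (hf : ∀ x, f x = 0 → B x x = 0 → x = 0) {W : Submodule K V}
    (hW : ∀ x ∈ W, ∀ y ∈ W, B x y = 0) {ξ : V} (hξ : ξ ∈ W) (hξ0 : ξ ≠ 0) :
    W ≤ K ∙ ξ := by
  intro η hη
  have hfξ : f ξ ≠ 0 := fun h => hξ0 (hf ξ h (hW ξ hξ ξ hξ))
  set ζ := f ξ • η - f η • ξ
  have hζW : ζ ∈ W := W.sub_mem (W.smul_mem _ hη) (W.smul_mem _ hξ)
  have hfζ : f ζ = 0 := by
    simp only [ζ, map_sub, map_smul, smul_eq_mul]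
    ring
  have hζ : f ξ • η = f η • ξ := sub_eq_zero.mp (hf ζ hfζ (hW ζ hζW ζ hζW))
  refine mem_span_singleton.mpr ⟨(f ξ)⁻¹ * f η, ?_⟩
  rw [mul_smul, ← hζ, smul_smul, inv_mul_cancel₀ hfξ, one_smul]

theorem range_eq_orthogonal_ker [FiniteDimensional K V] (hB : B.Nondegenerate)
    {S : V →ₗ[K] V} (hS : LinearMap.IsSelfAdjoint B S) :
    range S = B.orthogonal (ker S) := by
  refine eq_of_le_of_finrank_le ?_ ?_
  · rintro _ ⟨y, rfl⟩ z hz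
    change B z (S y) = 0
    rw [← hS, mem_ker.mp hz, map_zero, LinearMap.zero_apply]
  · rw [finrank_orthogonal hB, ← finrank_range_add_finrank_ker S]
    omega

end Field

section Lorentzian

variable {V : Type*} [AddCommGroup V] [Module ℝ V] {n : ℕ}

def IsLorentzianBasis (g : LinearMap.BilinForm ℝ V) (b : Basis (Fin n) ℝ V) : Prop :=
  ∀ i j : Fin n, g (b i) (b j) = if i = j then (if i.val = 0 then -1 else 1) else 0

variable {g : LinearMap.BilinForm ℝ V} {b : Basis (Fin n) ℝ V}

namespace IsLorentzianBasis

theorem nondegenerate (hb : IsLorentzianBasis g b) : g.Nondegenerate := by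
  refine (iIsOrtho.nondegenerate_iff_not_isOrtho_basis_self g b
    fun i j hij => (hb i j).trans (if_neg hij)).mpr fun i => ?_
  rw [hb, if_pos rfl]
  split_ifs <;> norm_num

theorem apply_basis_right (hb : IsLorentzianBasis g b) (x : V) (i : Fin n) :
    g x (b i) = (if i.val = 0 then -1 else 1) * b.repr x i := by
  conv_lhs => rw [← b.sum_repr x]
  simp only [map_sum, map_smul, LinearMap.sum_apply, LinearMap.smul_apply, smul_eq_mul]
  simp [hb _ i, mul_comm]

theorem apply_self (hb : IsLorentzianBasis g b) (x : V) :
    g x x = ∑ i, (if i.val = 0 then -1 else 1) * b.repr x i ^ 2 := by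
  nth_rw 2 [← b.sum_repr x]
  simp only [map_sum, map_smul, smul_eq_mul, hb.apply_basis_right]
  exact Finset.sum_congr rfl fun i _ => by ring

theorem eq_zero_of_isotropic (hb : IsLorentzianBasis g b) {x : V}
    (hx0 : ∀ i : Fin n, i.val = 0 → b.repr x i = 0) (hx : g x x = 0) : x = 0 := by
  have hsq : ∑ i, b.repr x i ^ 2 = 0 := by
    rw [← hx, hb.apply_self]
    refine Finset.sum_congr rfl fun i _ => ?_
    split_ifs with hi
    · simp [hx0 i hi]
    · rw [one_mul]
  rw [Finset.sum_eq_zero_iff_of_nonneg fun i _ => sq_nonneg _] at hsq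
  exact b.repr.injective (Finsupp.ext fun i => by simpa using hsq i (Finset.mem_univ i))

theorem exists_anisotropic_on_ker (hb : IsLorentzianBasis g b) :
    ∃ f : V →ₗ[ℝ] ℝ, ∀ x, f x = 0 → g x x = 0 → x = 0 := by
  rcases Nat.eq_zero_or_pos n with rfl | hn
  · exact ⟨0, fun x _ => hb.eq_zero_of_isotropic fun i => i.elim0⟩
  · refine ⟨b.coord ⟨0, hn⟩, fun x hx0 => hb.eq_zero_of_isotropic fun i hi => ?_⟩
    rwa [show i = ⟨0, hn⟩ from Fin.ext hi]

end IsLorentzianBasis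

end Lorentzian

end LinearMap.BilinForm

open LinearMap LinearMap.BilinForm

theorem degenerate_nullity_radical_is_null_line_general
    {V : Type*} [AddCommGroup V] [Module ℝ V] [FiniteDimensional ℝ V]
    (g : LinearMap.BilinForm ℝ V)
    {n : ℕ} (b : Module.Basis (Fin n) ℝ V)
    (hb : ∀ i j : Fin n, g (b i) (b j) =
      if i = j then (if i.val = 0 then -1 else 1) else 0)
    (S : V →ₗ[ℝ] V) (hS : ∀ x y : V, g (S x) y = g x (S y))
    (hdeg : LinearMap.ker S ⊓ g.orthogonal (LinearMap.ker S) ≠ ⊥) :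
    LinearMap.range S ⊓ LinearMap.ker S
        = LinearMap.ker S ⊓ g.orthogonal (LinearMap.ker S) ∧
    ∃ ξ : V, ξ ≠ 0 ∧ g ξ ξ = 0 ∧
      LinearMap.range S ⊓ LinearMap.ker S = Submodule.span ℝ {ξ} := by
  have hL : IsLorentzianBasis g b := hb
  have hrad : range S ⊓ ker S = ker S ⊓ g.orthogonal (ker S) := by
    rw [range_eq_orthogonal_ker hL.nondegenerate hS, inf_comm]
  obtain ⟨ξ, hξ, hξ0⟩ := (Submodule.ne_bot_iff _).mp hdeg
  obtain ⟨f, hf⟩ := hL.exists_anisotropic_on_ker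
  refine ⟨hrad, ξ, hξ0, hξ.2 ξ hξ.1, ?_⟩
  rw [hrad]
  refine le_antisymm ?_ ((Submodule.span_singleton_le_iff_mem _ _).mpr hξ)
  exact le_span_singleton_of_isotropic f hf (W := ker S ⊓ g.orthogonal (ker S))
    (fun x hx y hy => hy.2 x hx.1) hξ hξ0

/-- Let `S` be a `g`-symmetric operator on an `n`-dimensional
Lorentzian vector space with `dim ker S = n − 2` and `ker S` degenerate.  Then
`im S ∩ ker S = Rad(ker S)`, and this space is one-dimensional, spanned by a
null vector `ξ`. -/
theorem degenerate_nullity_radical_is_null_line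
    {V : Type*} [AddCommGroup V] [Module ℝ V] [FiniteDimensional ℝ V]
    (g : LinearMap.BilinForm ℝ V)
    (hsymm : ∀ x y : V, g x y = g y x)
    {n : ℕ} (b : Module.Basis (Fin n) ℝ V)
    (hb : ∀ i j : Fin n, g (b i) (b j) =
      if i = j then (if i.val = 0 then -1 else 1) else 0)
    (S : V →ₗ[ℝ] V) (hS : ∀ x y : V, g (S x) y = g x (S y))
    (hker : Module.finrank ℝ (LinearMap.ker S) = n - 2)
    (hdeg : LinearMap.ker S ⊓ g.orthogonal (LinearMap.ker S) ≠ ⊥) :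
    LinearMap.range S ⊓ LinearMap.ker S
        = LinearMap.ker S ⊓ g.orthogonal (LinearMap.ker S) ∧
    ∃ ξ : V, ξ ≠ 0 ∧ g ξ ξ = 0 ∧
      LinearMap.range S ⊓ LinearMap.ker S = Submodule.span ℝ {ξ} :=
  degenerate_nullity_radical_is_null_line_general g b hb S hS hdeg
end
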